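/- Proposition 2, Part 2 (zero-gradient phenomenon on the risk-difference scale). Let g(x) = eˣ/(1+eˣ) be the logistic function, and fix reals c and s ≠ s*. For real parameters α, β define F(α, β) = β·( g(α s + c) − g(α s* + c) ). Then: (i) for every α the derivative of a ↦ F(a, 0) at a = α is 0, and for every β the derivative of b ↦ F(0, b) at b = β is 0; (ii) for every β ≠ 0, the derivative of a ↦ F(a, β) at a = 0 equals β·g'(c)·(s − s*), which is nonzero; (iii) for every α ≠ 0, the derivative of b ↦ F(α, b) at b = 0 equals g(α s + c) − g(α s* + c), which is nonzero. -/

import Mathlib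

/-! The logistic link is Mathlib's `Real.sigmoid`, with `sigmoid' = sigmoid (1 - sigmoid) > 0`.
When `β = 0` or `α = 0` the function `F` vanishes identically along the other coordinate line
(at `α = 0` both arguments of `g` equal `c`), so both partial derivatives are `0` there. Off these
lines the chain rule gives `∂F/∂α (0, β) = β g'(c) (s - s*)`, nonzero because `g' > 0`, and
`∂F/∂β (α, 0) = g(α s + c) - g(α s* + c)`, nonzero because `g` is strictly increasing. -/

open Real

lemma Real.sigmoid_eq_exp_div (x : ℝ) : sigmoid x = exp x / (1 + exp x) := by
  rw [sigmoid_def, exp_neg]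
  field_simp
  ring

lemma Real.sigmoid_mul_one_sub_sigmoid (x : ℝ) :
    sigmoid x * (1 - sigmoid x) = exp x / (1 + exp x) ^ 2 := by
  rw [sigmoid_eq_exp_div]
  field_simp
  ring

lemma hasDerivAt_mul_sub_comp_affine {g g' : ℝ → ℝ} (hg : ∀ x, HasDerivAt g (g' x) x)
    (β s s' c a : ℝ) :
    HasDerivAt (fun a => β * (g (a * s + c) - g (a * s' + c)))
      (β * (g' (a * s + c) * s - g' (a * s' + c) * s')) a := by
  have affine : ∀ t, HasDerivAt (fun a : ℝ => a * t + c) t a := fun t => by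
    simpa using ((hasDerivAt_id a).mul_const t).add_const c
  exact (((hg _).comp a (affine s)).sub ((hg _).comp a (affine s'))).const_mul β

lemma sigmoid_sub_sigmoid_ne_zero {α s s' : ℝ} (hα : α ≠ 0) (hss : s ≠ s') (c : ℝ) :
    sigmoid (α * s + c) - sigmoid (α * s' + c) ≠ 0 := by
  rw [sub_ne_zero, Ne, sigmoid_inj, add_left_inj, mul_right_inj' hα]
  exact hss

/-- Proposition 2, Part 2: zero-gradient phenomenon of the natural indirect effect on the
risk-difference scale, with logistic mediator link `g x = eˣ/(1+eˣ)`. -/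
theorem prop2_part2_zero_gradient
    (c s s' : ℝ) (hss : s ≠ s')
    (g : ℝ → ℝ) (hg : g = fun x => Real.exp x / (1 + Real.exp x))
    (F : ℝ → ℝ → ℝ)
    (hF : F = fun α β => β * (g (α * s + c) - g (α * s' + c))) :
    (∀ α : ℝ, deriv (fun a => F a 0) α = 0) ∧
    (∀ β : ℝ, deriv (fun b => F 0 b) β = 0) ∧
    (∀ β : ℝ, β ≠ 0 →
      deriv (fun a => F a β) 0 = β * (Real.exp c / (1 + Real.exp c) ^ 2) * (s - s') ∧
      deriv (fun a => F a β) 0 ≠ 0) ∧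
    (∀ α : ℝ, α ≠ 0 →
      deriv (fun b => F α b) 0 = g (α * s + c) - g (α * s' + c) ∧
      deriv (fun b => F α b) 0 ≠ 0) := by
  obtain rfl : g = sigmoid := hg.trans (funext fun x => (sigmoid_eq_exp_div x).symm)
  subst hF
  refine ⟨fun α => by simp, fun β => by simp, fun β hβ => ?_, fun α hα => ?_⟩
  · have hderiv : deriv (fun a => β * (sigmoid (a * s + c) - sigmoid (a * s' + c))) 0 =
        β * (exp c / (1 + exp c) ^ 2) * (s - s') := by
      rw [(hasDerivAt_mul_sub_comp_affine hasDerivAt_sigmoid β s s' c 0).deriv]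
      simp only [zero_mul, zero_add, sigmoid_mul_one_sub_sigmoid]
      ring
    refine ⟨hderiv, hderiv ▸ ?_⟩
    have hslope : 0 < exp c / (1 + exp c) ^ 2 := by positivity
    exact mul_ne_zero (mul_ne_zero hβ hslope.ne') (sub_ne_zero.mpr hss)
  · have hderiv : deriv (fun b => b * (sigmoid (α * s + c) - sigmoid (α * s' + c))) 0 =
        sigmoid (α * s + c) - sigmoid (α * s' + c) := by
      simp
    exact ⟨hderiv, hderiv ▸ sigmoid_sub_sigmoid_ne_zero hα hss c⟩
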